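/- Exact probability that a fixed vertex set is a cut: fix 0<μ<1, n ≥ 2, 2 ≤ K_n < n, and 1 ≤ r ≤ n−1. In H(n;μ,K_n), the probability that S = {v_1,…,v_r} is a cut (no edges between S and its complement) equals ( μ·(n−r−1)/(n−1) + (1−μ)·C(n−r−1,K_n)/C(n−1,K_n) )^{n−r} · ( μ·(r−1)/(n−1) + (1−μ)·C(r−1,K_n)/C(n−1,K_n) )^{r}. -/

import Mathlib

/-!
`S` is a cut exactly when every node of `S` selects only inside `S` and every node outside `S`
selects only outside `S`. Types and selections are independent across nodes, so the probability
factorises over the nodes; a node whose selections must fall in a given set of `m` other nodes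
succeeds with probability `μ C(m,1)/C(n-1,1) + (1-μ) C(m,K)/C(n-1,K)`, where `m = r - 1` inside
`S` and `m = n - r - 1` outside.
-/

open Finset Filter Asymptotics

namespace KOut

/-- A configuration: for each node, its type (`true` = type-1, `false` = type-2)
and the set of nodes it selects. -/
abbrev Config (n : ℕ) := (Fin n → Bool) × (Fin n → Finset (Fin n))

/-- Probability density of a configuration in the inhomogeneous random K-out graph
model `H(n; μ, K)`: each node is independently type-1 with probability `μ` (type-2 with
probability `1-μ`), and, given its type, its selection set is uniform among the subsets
of the other `n-1` nodes of size `1` (type-1) resp. `K` (type-2). -/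
noncomputable def density (n : ℕ) (μ : ℝ) (K : ℕ) (ω : Config n) : ℝ :=
  ∏ i : Fin n,
    ((if ω.1 i then μ else 1 - μ) *
      (if i ∉ ω.2 i ∧ (ω.2 i).card = (if ω.1 i then 1 else K)
       then ((n - 1).choose (if ω.1 i then 1 else K) : ℝ)⁻¹ else 0))

/-- Probability of an event in `H(n; μ, K)`. -/
noncomputable def prob (n : ℕ) (μ : ℝ) (K : ℕ) (E : Set (Config n)) : ℝ :=
  ∑ ω : Config n, Set.indicator E (density n μ K) ω

/-- The (undirected) graph associated with a configuration: an edge joins two distinct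
nodes iff at least one of them selects the other. -/
def graph {n : ℕ} (ω : Config n) : SimpleGraph (Fin n) where
  Adj i j := i ≠ j ∧ (j ∈ ω.2 i ∨ i ∈ ω.2 j)
  symm := ⟨fun _ _ h => ⟨h.1.symm, h.2.symm⟩⟩
  loopless := ⟨fun _ h => h.1 rfl⟩

instance {n : ℕ} (ω : Config n) : DecidableRel (graph ω).Adj :=
  fun i j => inferInstanceAs (Decidable (i ≠ j ∧ (j ∈ ω.2 i ∨ i ∈ ω.2 j)))

/-- The mean number of selections `⟨K_n⟩ = μ + (1-μ) K_n`. -/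
noncomputable def avgK (μ : ℝ) (K : ℕ) : ℝ := μ + (1 - μ) * K

end KOut

theorem Fintype.sum_prod_pi_eq_prod_sum_sum {ι α β R : Type*} [Fintype ι] [DecidableEq ι] [Fintype α]
    [Fintype β] [CommSemiring R] (f : ι → α → β → R) :
    ∑ ω : (ι → α) × (ι → β), ∏ i, f i (ω.1 i) (ω.2 i) = ∏ i, ∑ a, ∑ b, f i a b := by
  rw [Fintype.sum_prod_type, Fintype.prod_sum]
  exact Finset.sum_congr rfl fun a _ => (Fintype.prod_sum fun i b => f i (a i) b).symm

theorem Finset.filter_powerset_notMem_card_eq {α : Type*} [DecidableEq α] (A : Finset α) (i : α)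
    (k : ℕ) : {X ∈ A.powerset | i ∉ X ∧ X.card = k} = (A.erase i).powersetCard k := by
  ext X
  simp only [mem_filter, mem_powerset, mem_powersetCard, subset_erase, and_assoc]

namespace KOut

def selectionSize (K : ℕ) (b : Bool) : ℕ := if b then 1 else K

def typeProb (μ : ℝ) (b : Bool) : ℝ := if b then μ else 1 - μ

noncomputable def nodeWeight (n : ℕ) (μ : ℝ) (K : ℕ) (i : Fin n) (b : Bool)
    (X : Finset (Fin n)) : ℝ :=
  typeProb μ b *
    if i ∉ X ∧ X.card = selectionSize K b then ((n - 1).choose (selectionSize K b) : ℝ)⁻¹ else 0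

theorem density_eq_prod_nodeWeight (n : ℕ) (μ : ℝ) (K : ℕ) (ω : Config n) :
    density n μ K ω = ∏ i, nodeWeight n μ K i (ω.1 i) (ω.2 i) :=
  rfl

/-- The probability that all selections of a node fall in a fixed set of `m` nodes other than
itself. -/
noncomputable def selectWithinProb (n : ℕ) (μ : ℝ) (K : ℕ) (m : ℕ) : ℝ :=
  ∑ b, typeProb μ b * (m.choose (selectionSize K b) : ℝ) /
    ((n - 1).choose (selectionSize K b) : ℝ)

theorem sum_powerset_nodeWeight (n : ℕ) (μ : ℝ) (K : ℕ) (i : Fin n) (b : Bool)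
    (A : Finset (Fin n)) :
    ∑ X ∈ A.powerset, nodeWeight n μ K i b X =
      typeProb μ b * ((A.erase i).card.choose (selectionSize K b) : ℝ) /
        ((n - 1).choose (selectionSize K b) : ℝ) := by
  simp only [nodeWeight, ← Finset.mul_sum, ← Finset.sum_filter, Finset.sum_const,
    Finset.filter_powerset_notMem_card_eq, Finset.card_powersetCard, nsmul_eq_mul]
  ring

theorem prob_forall_selection_subset (n : ℕ) (μ : ℝ) (K : ℕ) (A : Fin n → Finset (Fin n)) :
    prob n μ K {ω | ∀ i, ω.2 i ⊆ A i} = ∏ i, selectWithinProb n μ K ((A i).erase i).card := by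
  have hterm : ∀ ω : Config n, Set.indicator {ω | ∀ i, ω.2 i ⊆ A i} (density n μ K) ω =
      ∏ i, if ω.2 i ⊆ A i then nodeWeight n μ K i (ω.1 i) (ω.2 i) else 0 := by
    intro ω
    rw [Fintype.prod_ite_zero, ← density_eq_prod_nodeWeight, Set.indicator_apply]
    congr 1
  simp only [prob, hterm, Fintype.sum_prod_pi_eq_prod_sum_sum (fun i b X =>
    if X ⊆ A i then nodeWeight n μ K i b X else 0), ← Finset.sum_filter,
    Finset.filter_subset_univ, sum_powerset_nodeWeight, selectWithinProb]

theorem no_edge_to_compl_iff_forall_subset {n : ℕ} (S : Finset (Fin n)) (ω : Config n) :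
    (∀ i ∈ S, ∀ j ∉ S, ¬ (graph ω).Adj i j) ↔ ∀ i, ω.2 i ⊆ if i ∈ S then S else Sᶜ := by
  constructor
  · intro h i j hj
    by_cases hi : i ∈ S
    · rw [if_pos hi]
      by_contra hjS
      exact h i hi j hjS ⟨fun hij => hjS (hij ▸ hi), Or.inl hj⟩
    · rw [if_neg hi, mem_compl]
      intro hjS
      exact h j hjS i hi ⟨fun hji => hi (hji ▸ hjS), Or.inr hj⟩
  · rintro h i hi j hj ⟨-, hij | hji⟩
    · simpa [hi, hj] using h i hij
    · simpa [hi, hj] using h j hji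

theorem prob_no_edge_to_compl (n : ℕ) (μ : ℝ) (K : ℕ) (S : Finset (Fin n)) :
    prob n μ K {ω | ∀ i ∈ S, ∀ j ∉ S, ¬ (graph ω).Adj i j} =
      selectWithinProb n μ K (Sᶜ.card - 1) ^ Sᶜ.card *
        selectWithinProb n μ K (S.card - 1) ^ S.card := by
  have hside : ∀ i, selectWithinProb n μ K (((if i ∈ S then S else Sᶜ).erase i).card) =
      if i ∈ S then selectWithinProb n μ K (S.card - 1)
      else selectWithinProb n μ K (Sᶜ.card - 1) := by
    intro i
    split_ifs with hi
    · rw [card_erase_of_mem hi]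
    · rw [card_erase_of_mem (mem_compl.2 hi)]
  simp only [no_edge_to_compl_iff_forall_subset, prob_forall_selection_subset, hside,
    prod_ite, filter_mem_eq_inter, univ_inter, filter_not, ← compl_eq_univ_sdiff, prod_const]
  ring

theorem selectWithinProb_eq (μ : ℝ) (K : ℕ) {n : ℕ} (hn : 1 ≤ n) (m : ℕ) :
    selectWithinProb n μ K m =
      μ * m / ((n : ℝ) - 1) + (1 - μ) * (m.choose K : ℝ) / ((n - 1).choose K : ℝ) := by
  simp [selectWithinProb, selectionSize, typeProb, Nat.cast_sub hn]

theorem cut_probability_exact_general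
    (μ : ℝ)
    (n : ℕ) (K : ℕ)
    (r : ℕ) (hr1 : 1 ≤ r) (hr2 : r ≤ n - 1) :
    prob n μ K
        {ω | ∀ i : Fin n, (i : ℕ) < r → ∀ j : Fin n, ¬ (j : ℕ) < r → ¬ (graph ω).Adj i j} =
      (μ * ((n : ℝ) - r - 1) / ((n : ℝ) - 1) +
          (1 - μ) * ((n - r - 1).choose K : ℝ) / ((n - 1).choose K : ℝ)) ^ (n - r) *
        (μ * ((r : ℝ) - 1) / ((n : ℝ) - 1) +
          (1 - μ) * ((r - 1).choose K : ℝ) / ((n - 1).choose K : ℝ)) ^ r := by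
  set S : Finset (Fin n) := {i | (i : ℕ) < r}
  have hS : S.card = r := by rw [Fin.card_filter_val_lt]; omega
  have hSc : Sᶜ.card = n - r := by rw [card_compl, Fintype.card_fin, hS]
  have hcut := prob_no_edge_to_compl n μ K S
  simp only [S, mem_filter, mem_univ, true_and] at hcut
  rw [hcut, hS, hSc, selectWithinProb_eq μ K (by omega), selectWithinProb_eq μ K (by omega),
    Nat.cast_sub (by omega : 1 ≤ n - r), Nat.cast_sub (by omega : r ≤ n), Nat.cast_sub hr1,
    Nat.cast_one]

/-- Exact probability that the fixed vertex set `S = {v_1,…,v_r}`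
is a cut (no edges between `S` and its complement):
`P = (μ(n-r-1)/(n-1) + (1-μ)C(n-r-1,K)/C(n-1,K))^(n-r)
   · (μ(r-1)/(n-1) + (1-μ)C(r-1,K)/C(n-1,K))^r`. -/
theorem cut_probability_exact
    (μ : ℝ) (hμ0 : 0 < μ) (hμ1 : μ < 1)
    (n : ℕ) (hn : 2 ≤ n) (K : ℕ) (hK : 2 ≤ K) (hKn : K < n)
    (r : ℕ) (hr1 : 1 ≤ r) (hr2 : r ≤ n - 1) :
    prob n μ K
        {ω | ∀ i : Fin n, (i : ℕ) < r → ∀ j : Fin n, ¬ (j : ℕ) < r → ¬ (graph ω).Adj i j} =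
      (μ * ((n : ℝ) - r - 1) / ((n : ℝ) - 1) +
          (1 - μ) * ((n - r - 1).choose K : ℝ) / ((n - 1).choose K : ℝ)) ^ (n - r) *
        (μ * ((r : ℝ) - 1) / ((n : ℝ) - 1) +
          (1 - μ) * ((r - 1).choose K : ℝ) / ((n - 1).choose K : ℝ)) ^ r :=
  cut_probability_exact_general μ n K r hr1 hr2

end KOut
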